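/- arXiv:2110.14000 — 4 statements merged into one kernel-verified Lean document; each statement's English description precedes it below -/
import Mathlib

section
/- (Aggregation error at Q^π.) In the finite MDP setting, let π : S → A be a deterministic policy with value function Q^π (the unique fixed point of T^π), μ a fully supported probability distribution on S×A, and φ : S×A → I a partition function. Let ε_φ = min{∥g − Q^π∥_∞ : g is φ-measurable}. Then ∥Q^π − T_G^π Q^π∥_∞ ≤ 2 ε_φ. -/
open Finset

/-- Cellwise `μ`-weighted average over the cells of `φ`. -/
noncomputable def cellAvg {S A I : Type*} [Fintype S] [Fintype A] [DecidableEq I]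
    (μ : S × A → ℝ) (φ : S × A → I) (h : S × A → ℝ) (x : S × A) : ℝ :=
  (∑ y : S × A, if φ y = φ x then μ y * h y else 0) /
  (∑ y : S × A, if φ y = φ x then μ y else 0)

/-- The policy Bellman operator `T^π`. -/
noncomputable def TPol {S A : Type*} [Fintype S] [Fintype A]
    (R : S × A → ℝ) (P : S × A → S → ℝ) (γ : ℝ) (π : S → A)
    (Q : S × A → ℝ) (x : S × A) : ℝ :=
  R x + γ * ∑ s' : S, P x s' * Q (s', π s')

/-- The sup-norm over the finite state-action space. -/
noncomputable def supNorm {S A : Type*} [Fintype S] [Fintype A] [Nonempty S] [Nonempty A]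
    (f : S × A → ℝ) : ℝ :=
  univ.sup' univ_nonempty fun x : S × A => |f x|

/-- The `ν`-weighted `L₂` norm. -/
noncomputable def l2mu {S A : Type*} [Fintype S] [Fintype A]
    (ν : S × A → ℝ) (f : S × A → ℝ) : ℝ :=
  Real.sqrt (∑ x : S × A, ν x * f x ^ 2)

/-- The best approximation error of `Qpi` by `φ`-measurable (piecewise constant)
functions, in sup-norm: `ε_φ = min {‖g − Q^π‖_∞ : g is φ-measurable}`. -/
noncomputable def epsPhi {S A I : Type*} [Fintype S] [Fintype A] [Nonempty S] [Nonempty A]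
    (φ : S × A → I) (Qpi : S × A → ℝ) : ℝ :=
  sInf {t : ℝ | ∃ g : S × A → ℝ,
    (∀ x y, φ x = φ y → g x = g y) ∧ supNorm (fun x => g x - Qpi x) = t}


section Aux
variable {S A I : Type*} [Fintype S] [Fintype A] [DecidableEq I]

lemma denom_pos (μ : S × A → ℝ) (hμpos : ∀ x, 0 < μ x) (φ : S × A → I) (x : S × A) :
    0 < ∑ y : S × A, if φ y = φ x then μ y else 0 := by
  have h0 : (0:ℝ) < (if φ x = φ x then μ x else 0) := by simp [hμpos x]
  refine lt_of_lt_of_le h0 ?_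
  refine Finset.single_le_sum (f := fun y => if φ y = φ x then μ y else 0) ?_ (mem_univ x)
  intro y _
  split
  · exact (hμpos y).le
  · exact le_rfl

lemma cellAvg_abs_le [Nonempty S] [Nonempty A] (μ : S × A → ℝ) (hμpos : ∀ x, 0 < μ x)
    (φ : S × A → I) (f : S × A → ℝ) (x : S × A) :
    |cellAvg μ φ f x| ≤ supNorm f := by
  have hD := denom_pos μ hμpos φ x
  rw [cellAvg, abs_div, abs_of_pos hD, div_le_iff₀ hD]
  calc |∑ y : S × A, if φ y = φ x then μ y * f y else 0|
      ≤ ∑ y : S × A, |if φ y = φ x then μ y * f y else 0| :=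
        Finset.abs_sum_le_sum_abs _ _
    _ ≤ ∑ y : S × A, (if φ y = φ x then μ y else 0) * supNorm f := by
        apply Finset.sum_le_sum; intro y _
        split
        · rw [abs_mul, abs_of_pos (hμpos y)]
          exact mul_le_mul_of_nonneg_left
            (Finset.le_sup' (fun z : S × A => |f z|) (mem_univ y)) (hμpos y).le
        · simp
    _ = supNorm f * ∑ y : S × A, if φ y = φ x then μ y else 0 := by
        rw [← Finset.sum_mul]; ring

lemma cellAvg_meas (μ : S × A → ℝ) (hμpos : ∀ x, 0 < μ x) (φ : S × A → I)
    (g : S × A → ℝ) (hg : ∀ x y, φ x = φ y → g x = g y) (x : S × A) :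
    cellAvg μ φ g x = g x := by
  have hD := denom_pos μ hμpos φ x
  rw [cellAvg]
  have hnum : ∑ y : S × A, (if φ y = φ x then μ y * g y else 0)
      = g x * ∑ y : S × A, (if φ y = φ x then μ y else 0) := by
    rw [Finset.mul_sum]
    refine Finset.sum_congr rfl fun y _ => ?_
    split_ifs with h
    · rw [hg y x h]; ring
    · ring
  rw [hnum, mul_div_assoc, div_self hD.ne', mul_one]

lemma cellAvg_sub (μ : S × A → ℝ) (φ : S × A → I) (g f : S × A → ℝ) (x : S × A) :
    cellAvg μ φ (fun y => g y - f y) x = cellAvg μ φ g x - cellAvg μ φ f x := by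
  rw [cellAvg, cellAvg, cellAvg, div_sub_div_same]
  congr 1
  rw [← Finset.sum_sub_distrib]
  refine Finset.sum_congr rfl fun y _ => ?_
  split <;> ring

end Aux

/-- aggregation error at `Q^π`: `‖Q^π − T_G^π Q^π‖_∞ ≤ 2 ε_φ`. -/
theorem stmt_10 {S A I : Type*} [Fintype S] [Fintype A] [Nonempty S] [Nonempty A]
    [DecidableEq I]
    (Rmax : ℝ) (R : S × A → ℝ) (hR : ∀ x, 0 ≤ R x ∧ R x ≤ Rmax)
    (P : S × A → S → ℝ) (hP0 : ∀ x s', 0 ≤ P x s') (hP1 : ∀ x, ∑ s' : S, P x s' = 1)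
    (γ : ℝ) (hγ0 : 0 ≤ γ) (hγ1 : γ < 1)
    (π : S → A)
    (Qpi : S × A → ℝ) (hQpi : TPol R P γ π Qpi = Qpi)
    (μ : S × A → ℝ) (hμpos : ∀ x, 0 < μ x) (hμsum : ∑ x : S × A, μ x = 1)
    (φ : S × A → I) :
    supNorm (fun x => Qpi x - cellAvg μ φ (TPol R P γ π Qpi) x) ≤ 2 * epsPhi φ Qpi := by
  rw [hQpi]
  have hne : {t : ℝ | ∃ g : S × A → ℝ,
      (∀ x y, φ x = φ y → g x = g y) ∧ supNorm (fun x => g x - Qpi x) = t}.Nonempty :=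
    ⟨_, fun _ => (0:ℝ), fun _ _ _ => rfl, rfl⟩
  have key : ∀ t ∈ {t : ℝ | ∃ g : S × A → ℝ,
      (∀ x y, φ x = φ y → g x = g y) ∧ supNorm (fun x => g x - Qpi x) = t},
      supNorm (fun x => Qpi x - cellAvg μ φ Qpi x) / 2 ≤ t := by
    rintro t ⟨g, hg, rfl⟩
    rw [div_le_iff₀ (by norm_num : (0:ℝ) < 2)]
    refine Finset.sup'_le _ _ fun x _ => ?_
    have h1 : |g x - Qpi x| ≤ supNorm (fun x => g x - Qpi x) :=
      Finset.le_sup' (fun z : S × A => |g z - Qpi z|) (mem_univ x)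
    have h2 : |cellAvg μ φ (fun y => g y - Qpi y) x| ≤ supNorm (fun x => g x - Qpi x) :=
      cellAvg_abs_le μ hμpos φ _ x
    have h3 : cellAvg μ φ (fun y => g y - Qpi y) x = g x - cellAvg μ φ Qpi x := by
      rw [cellAvg_sub, cellAvg_meas μ hμpos φ g hg]
    have h4 : Qpi x - cellAvg μ φ Qpi x
        = (Qpi x - g x) + cellAvg μ φ (fun y => g y - Qpi y) x := by rw [h3]; ring
    calc |Qpi x - cellAvg μ φ Qpi x|
        ≤ |Qpi x - g x| + |cellAvg μ φ (fun y => g y - Qpi y) x| := by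
          rw [h4]; exact abs_add_le _ _
      _ ≤ supNorm (fun x => g x - Qpi x) * 2 := by
          rw [abs_sub_comm] at h1; linarith
  have := le_csInf hne key
  rw [epsPhi]
  linarith
end

section
/- (Population upper bound on the projected Bellman residual.) In the finite MDP setting, let π : S → A be a deterministic policy with value function Q^π, μ a fully supported probability distribution on S×A, φ : S×A → I a partition function, and f : S×A → ℝ. Let ε_φ = min{∥g − Q^π∥_∞ : g is φ-measurable}. Then ∥f − T_G^π f∥_{2,μ} ≤ (1+γ) ∥f − Q^π∥_∞ + 2 ε_φ. -/
open Finset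

/-! For a φ-measurable `g`, split `f - T_G f` as `(f - Q) + (Q - g) + (g - T_G f)`. The last term
is the cell average of `g - T f` (since `g` is constant on cells), and
`|g - T f| ≤ |g - Q| + |T Q - T f| ≤ ‖g - Q‖_∞ + γ ‖f - Q‖_∞` because `Q = T Q` and `T` is a
`γ`-contraction in sup-norm. Hence `f - T_G f` is bounded pointwise by
`(1 + γ) ‖f - Q‖_∞ + 2 ‖g - Q‖_∞`, so is its `L₂(μ)` norm, and one takes the infimum over `g`. -/

lemma abs_sum_mul_le_sum_mul {ι : Type*} (s : Finset ι) {w h : ι → ℝ} {C : ℝ}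
    (hw : ∀ i ∈ s, 0 ≤ w i) (hh : ∀ i ∈ s, |h i| ≤ C) :
    |∑ i ∈ s, w i * h i| ≤ (∑ i ∈ s, w i) * C := by
  calc |∑ i ∈ s, w i * h i| ≤ ∑ i ∈ s, |w i * h i| := abs_sum_le_sum_abs _ _
    _ ≤ ∑ i ∈ s, w i * C := sum_le_sum fun i hi => by
        rw [abs_mul, abs_of_nonneg (hw i hi)]
        exact mul_le_mul_of_nonneg_left (hh i hi) (hw i hi)
    _ = (∑ i ∈ s, w i) * C := (sum_mul _ _ _).symm

section FiniteMDP

variable {S A I : Type*} [Fintype S] [Fintype A]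

section SupNorm

variable [Nonempty S] [Nonempty A]

lemma abs_le_supNorm (f : S × A → ℝ) (x : S × A) : |f x| ≤ supNorm f :=
  le_sup' (fun y => |f y|) (mem_univ x)

lemma supNorm_nonneg (f : S × A → ℝ) : 0 ≤ supNorm f :=
  (abs_nonneg _).trans (abs_le_supNorm f (Classical.arbitrary _))

lemma le_epsPhi (φ : S × A → I) (Q : S × A → ℝ) {c : ℝ}
    (h : ∀ g : S × A → ℝ, (∀ x y, φ x = φ y → g x = g y) → c ≤ supNorm (fun x => g x - Q x)) :
    c ≤ epsPhi φ Q :=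
  le_csInf ⟨_, fun _ => 0, fun _ _ _ => rfl, rfl⟩ fun _ ⟨g, hg, hgt⟩ => hgt ▸ h g hg

end SupNorm

lemma l2mu_le_of_abs_le {ν : S × A → ℝ} (hν : ∀ x, 0 ≤ ν x) (hνsum : ∑ x, ν x = 1)
    {h : S × A → ℝ} {C : ℝ} (hC : 0 ≤ C) (hh : ∀ x, |h x| ≤ C) : l2mu ν h ≤ C := by
  have hsq : ∀ x ∈ univ, |h x ^ 2| ≤ C ^ 2 := fun x _ => by
    rw [abs_pow]; exact pow_le_pow_left₀ (abs_nonneg _) (hh x) 2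
  have hsum : ∑ x, ν x * h x ^ 2 ≤ C ^ 2 := by
    simpa [hνsum] using (le_abs_self _).trans
      (abs_sum_mul_le_sum_mul univ (fun x _ => hν x) hsq)
  exact Real.sqrt_le_iff.mpr ⟨hC, hsum⟩

lemma abs_TPol_sub_TPol_le [Nonempty S] [Nonempty A] (R : S × A → ℝ) {P : S × A → S → ℝ}
    (hP0 : ∀ x s', 0 ≤ P x s') (hP1 : ∀ x, ∑ s', P x s' = 1) {γ : ℝ} (hγ0 : 0 ≤ γ)
    (π : S → A) (f Q : S × A → ℝ) (x : S × A) :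
    |TPol R P γ π f x - TPol R P γ π Q x| ≤ γ * supNorm (fun y => f y - Q y) := by
  have hdiff : TPol R P γ π f x - TPol R P γ π Q x
      = γ * ∑ s', P x s' * (f (s', π s') - Q (s', π s')) := by
    simp only [TPol, mul_sub, sum_sub_distrib]; ring
  rw [hdiff, abs_mul, abs_of_nonneg hγ0]
  refine mul_le_mul_of_nonneg_left ?_ hγ0
  simpa [hP1] using abs_sum_mul_le_sum_mul univ (fun s' _ => hP0 x s')
    (fun s' _ => abs_le_supNorm (fun y => f y - Q y) (s', π s'))

section CellAvg

variable [DecidableEq I] {μ : S × A → ℝ} (φ : S × A → I)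

lemma cellAvg_eq (h : S × A → ℝ) (x : S × A) :
    cellAvg μ φ h x = (∑ y ∈ univ.filter (φ · = φ x), μ y * h y) /
      ∑ y ∈ univ.filter (φ · = φ x), μ y := by
  simp only [cellAvg, sum_filter]

variable (hμpos : ∀ x, 0 < μ x)
include hμpos

lemma cell_weight_pos (x : S × A) : 0 < ∑ y ∈ univ.filter (φ · = φ x), μ y :=
  sum_pos (fun y _ => hμpos y) ⟨x, mem_filter.mpr ⟨mem_univ x, rfl⟩⟩

lemma abs_cellAvg_le {h : S × A → ℝ} {C : ℝ} (hh : ∀ y, |h y| ≤ C) (x : S × A) :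
    |cellAvg μ φ h x| ≤ C := by
  have hw := cell_weight_pos φ hμpos x
  rw [cellAvg_eq φ, abs_div, abs_of_pos hw, div_le_iff₀ hw, mul_comm]
  exact abs_sum_mul_le_sum_mul _ (fun y _ => (hμpos y).le) (fun y _ => hh y)

lemma cellAvg_sub_of_measurable {g : S × A → ℝ} (hg : ∀ x y, φ x = φ y → g x = g y)
    (h : S × A → ℝ) (x : S × A) :
    cellAvg μ φ (fun y => g y - h y) x = g x - cellAvg μ φ h x := by
  have hw := cell_weight_pos φ hμpos x
  have hnum : ∑ y ∈ univ.filter (φ · = φ x), μ y * (g y - h y)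
      = g x * ∑ y ∈ univ.filter (φ · = φ x), μ y - ∑ y ∈ univ.filter (φ · = φ x), μ y * h y := by
    rw [mul_sum, ← sum_sub_distrib]
    refine sum_congr rfl fun y hy => ?_
    rw [hg y x (mem_filter.mp hy).2]; ring
  rw [cellAvg_eq φ, cellAvg_eq φ, hnum, sub_div, mul_div_cancel_right₀ _ hw.ne']

lemma abs_sub_cellAvg_le_of_measurable {g h : S × A → ℝ} (hg : ∀ x y, φ x = φ y → g x = g y)
    {C : ℝ} (hgh : ∀ y, |g y - h y| ≤ C) (x : S × A) : |g x - cellAvg μ φ h x| ≤ C := by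
  rw [← cellAvg_sub_of_measurable φ hμpos hg]
  exact abs_cellAvg_le φ hμpos hgh x

end CellAvg

lemma abs_sub_cellAvg_TPol_le [Nonempty S] [Nonempty A] [DecidableEq I]
    (R : S × A → ℝ) {P : S × A → S → ℝ} (hP0 : ∀ x s', 0 ≤ P x s')
    (hP1 : ∀ x, ∑ s', P x s' = 1) {γ : ℝ} (hγ0 : 0 ≤ γ) (π : S → A)
    {Q : S × A → ℝ} (hQ : TPol R P γ π Q = Q) {μ : S × A → ℝ} (hμpos : ∀ x, 0 < μ x)
    (φ : S × A → I) {g : S × A → ℝ} (hg : ∀ x y, φ x = φ y → g x = g y)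
    (f : S × A → ℝ) (x : S × A) :
    |f x - cellAvg μ φ (TPol R P γ π f) x| ≤
      (1 + γ) * supNorm (fun y => f y - Q y) + 2 * supNorm (fun y => g y - Q y) := by
  set e := supNorm (fun y => f y - Q y)
  set s := supNorm (fun y => g y - Q y)
  have hfQ : ∀ y, |f y - Q y| ≤ e := abs_le_supNorm (fun y => f y - Q y)
  have hgQ : ∀ y, |g y - Q y| ≤ s := abs_le_supNorm (fun y => g y - Q y)
  have hgT : ∀ y, |g y - TPol R P γ π f y| ≤ s + γ * e := fun y => by
    have hTf := abs_TPol_sub_TPol_le R hP0 hP1 hγ0 π f Q y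
    rw [hQ, abs_sub_comm] at hTf
    exact (abs_sub_le _ (Q y) _).trans (add_le_add (hgQ y) hTf)
  calc |f x - cellAvg μ φ (TPol R P γ π f) x|
      ≤ |f x - Q x| + (|Q x - g x| + |g x - cellAvg μ φ (TPol R P γ π f) x|) :=
        (abs_sub_le _ (Q x) _).trans (add_le_add_right (abs_sub_le _ _ _) _)
    _ ≤ e + (s + (s + γ * e)) := by
        gcongr
        · exact hfQ x
        · exact abs_sub_comm (Q x) (g x) ▸ hgQ x
        · exact abs_sub_cellAvg_le_of_measurable φ hμpos hg hgT x
    _ = (1 + γ) * e + 2 * s := by ring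

end FiniteMDP

theorem stmt_11_general {S A I : Type*} [Fintype S] [Fintype A] [Nonempty S] [Nonempty A]
    [DecidableEq I]
    (R : S × A → ℝ)
    (P : S × A → S → ℝ) (hP0 : ∀ x s', 0 ≤ P x s') (hP1 : ∀ x, ∑ s' : S, P x s' = 1)
    (γ : ℝ) (hγ0 : 0 ≤ γ)
    (π : S → A)
    (Qpi : S × A → ℝ) (hQpi : TPol R P γ π Qpi = Qpi)
    (μ : S × A → ℝ) (hμpos : ∀ x, 0 < μ x) (hμsum : ∑ x : S × A, μ x = 1)
    (φ : S × A → I) (f : S × A → ℝ) :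
    l2mu μ (fun x => f x - cellAvg μ φ (TPol R P γ π f) x) ≤
      (1 + γ) * supNorm (fun x => f x - Qpi x) + 2 * epsPhi φ Qpi := by
  have he := supNorm_nonneg (fun x => f x - Qpi x)
  suffices (l2mu μ (fun x => f x - cellAvg μ φ (TPol R P γ π f) x)
      - (1 + γ) * supNorm (fun x => f x - Qpi x)) / 2 ≤ epsPhi φ Qpi by linarith
  refine le_epsPhi φ Qpi fun g hg => ?_
  have hs := supNorm_nonneg (fun x => g x - Qpi x)
  have := l2mu_le_of_abs_le (fun x => (hμpos x).le) hμsum (by positivity)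
    (abs_sub_cellAvg_TPol_le R hP0 hP1 hγ0 π hQpi hμpos φ hg f)
  linarith

/-- population upper bound on the projected Bellman residual:
`‖f − T_G^π f‖₂,μ ≤ (1+γ)‖f − Q^π‖_∞ + 2 ε_φ`. -/
theorem stmt_11 {S A I : Type*} [Fintype S] [Fintype A] [Nonempty S] [Nonempty A]
    [DecidableEq I]
    (Rmax : ℝ) (R : S × A → ℝ) (hR : ∀ x, 0 ≤ R x ∧ R x ≤ Rmax)
    (P : S × A → S → ℝ) (hP0 : ∀ x s', 0 ≤ P x s') (hP1 : ∀ x, ∑ s' : S, P x s' = 1)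
    (γ : ℝ) (hγ0 : 0 ≤ γ) (hγ1 : γ < 1)
    (π : S → A)
    (Qpi : S × A → ℝ) (hQpi : TPol R P γ π Qpi = Qpi)
    (μ : S × A → ℝ) (hμpos : ∀ x, 0 < μ x) (hμsum : ∑ x : S × A, μ x = 1)
    (φ : S × A → I) (f : S × A → ℝ) :
    l2mu μ (fun x => f x - cellAvg μ φ (TPol R P γ π f) x) ≤
      (1 + γ) * supNorm (fun x => f x - Qpi x) + 2 * epsPhi φ Qpi :=
  stmt_11_general R P hP0 hP1 γ hγ0 π Qpi hQpi μ hμpos hμsum φ f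
end

section
/- (Population error propagation for BVFT-PE.) In the finite MDP setting, let μ be a fully supported probability distribution on S×A with state marginal μ_S(s) = ∑_a μ(s,a), and suppose there exist C_A ≥ 1, C_S ≥ 1 with μ(s,a) ≥ μ_S(s)/C_A for all (s,a) and P(s'|s,a) ≤ C_S μ_S(s') for all (s,a,s'); set C = C_S C_A. Let π : S → A be a deterministic policy with value function Q^π, φ : S×A → I a partition function, f : S×A → ℝ, and ε_φ = min{∥g − Q^π∥_∞ : g is φ-measurable}. Then for every probability distribution ν on S×A with ν(s,a) ≤ C μ(s,a) for all (s,a): ∥f − Q^π∥_{2,ν} ≤ (2 ε_φ + √C · ∥f − T_G^π f∥_{2,μ}) / (1−γ). -/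
open Finset

/-!
Write `d = f - Q^π`, `Π` for cellwise `μ`-averaging (so `T_G^π = Π T^π`) and `M` for the
supremum of `‖d‖_{2,ρ}` over distributions `ρ ≤ C μ`. In the splitting
`d = (f - T_G^π f) + (T_G^π f - Π Q^π) + (Π Q^π - Q^π)` the first term has `ρ`-norm at most
`√C ‖f - T_G^π f‖_{2,μ}`, and the last is at most `2 ε_φ` pointwise, because `Π` fixes
`φ`-measurable functions and does not increase the sup norm. The middle term is `γ Π P^π d`; by
Jensen its `ρ`-norm is at most `γ ‖d‖_{2,ρ'}`, where `ρ'` is the image of `ρ` under the kernel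
`Π P` followed by `π`, and the two halves of Assumption 1 are exactly what make `ρ' ≤ C μ` again.
Hence `M ≤ 2 ε_φ + √C ‖f - T_G^π f‖_{2,μ} + γ M`.
-/

section StochasticWeights

variable {ι : Type*} [Fintype ι] {p : ι → ℝ}

theorem sum_mul_le_of_le (hp0 : ∀ i, 0 ≤ p i) (hp1 : ∑ i, p i = 1) {h : ι → ℝ} {c : ℝ}
    (hc : ∀ i, h i ≤ c) : ∑ i, p i * h i ≤ c :=
  calc ∑ i, p i * h i ≤ ∑ i, p i * c :=
        sum_le_sum fun i _ => mul_le_mul_of_nonneg_left (hc i) (hp0 i)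
    _ = c := by rw [← sum_mul, hp1, one_mul]

theorem abs_sum_mul_le_of_abs_le (hp0 : ∀ i, 0 ≤ p i) (hp1 : ∑ i, p i = 1) {h : ι → ℝ}
    {c : ℝ} (hc : ∀ i, |h i| ≤ c) : |∑ i, p i * h i| ≤ c :=
  calc |∑ i, p i * h i| ≤ ∑ i, p i * |h i| := by
        simpa only [abs_mul, abs_of_nonneg (hp0 _)] using
          abs_sum_le_sum_abs (fun i => p i * h i) univ
    _ ≤ c := sum_mul_le_of_le hp0 hp1 hc

theorem sum_mul_eq_of_forall_ne_zero (hp1 : ∑ i, p i = 1) {h : ι → ℝ} {c : ℝ}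
    (hc : ∀ i, p i ≠ 0 → h i = c) : ∑ i, p i * h i = c :=
  calc ∑ i, p i * h i = ∑ i, p i * c := sum_congr rfl fun i _ => by
        by_cases hi : p i = 0
        · simp [hi]
        · rw [hc i hi]
    _ = c := by rw [← sum_mul, hp1, one_mul]

theorem sq_sum_mul_le_sum_mul_sq (hp0 : ∀ i, 0 ≤ p i) (hp1 : ∑ i, p i = 1) (h : ι → ℝ) :
    (∑ i, p i * h i) ^ 2 ≤ ∑ i, p i * h i ^ 2 := by
  simpa only [hp1, one_mul] using sum_sq_le_sum_mul_sum_of_sq_le_mul univ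
    (fun i _ => hp0 i) (fun i _ => mul_nonneg (hp0 i) (sq_nonneg (h i)))
    (fun i _ => (by ring : (p i * h i) ^ 2 = p i * (p i * h i ^ 2)).le)

end StochasticWeights

section Kernels

variable {α β : Type*} [Fintype α] [Fintype β] {K : α → β → ℝ}

theorem sum_sum_mul_kernel (hK1 : ∀ x, ∑ y, K x y = 1) (ρ : α → ℝ) :
    ∑ y, ∑ x, ρ x * K x y = ∑ x, ρ x := by
  rw [sum_comm]
  simp only [← mul_sum, hK1, mul_one]

theorem sum_mul_sq_kernel_le (hK0 : ∀ x y, 0 ≤ K x y) (hK1 : ∀ x, ∑ y, K x y = 1)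
    {ρ : α → ℝ} (hρ : ∀ x, 0 ≤ ρ x) (h : β → ℝ) :
    ∑ x, ρ x * (∑ y, K x y * h y) ^ 2 ≤ ∑ y, (∑ x, ρ x * K x y) * h y ^ 2 :=
  calc ∑ x, ρ x * (∑ y, K x y * h y) ^ 2 ≤ ∑ x, ρ x * ∑ y, K x y * h y ^ 2 :=
        sum_le_sum fun x _ => mul_le_mul_of_nonneg_left
          (sq_sum_mul_le_sum_mul_sq (hK0 x) (hK1 x) h) (hρ x)
    _ = ∑ y, (∑ x, ρ x * K x y) * h y ^ 2 := by
        simp only [mul_sum, sum_mul, mul_assoc]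
        exact sum_comm

end Kernels

section Cells

variable {S A I : Type*} [Fintype S] [Fintype A] [DecidableEq I]

noncomputable def cellMass (μ : S × A → ℝ) (φ : S × A → I) (x : S × A) : ℝ :=
  ∑ y : S × A, if φ y = φ x then μ y else 0

noncomputable def cellKernel (μ : S × A → ℝ) (φ : S × A → I) (x y : S × A) : ℝ :=
  if φ y = φ x then μ y / cellMass μ φ x else 0

variable {μ : S × A → ℝ} {φ : S × A → I}

theorem cellMass_pos (hμ : ∀ y, 0 < μ y) (x : S × A) : 0 < cellMass μ φ x :=
  sum_pos' (fun y _ => by split_ifs <;> simp [(hμ y).le]) ⟨x, mem_univ x, by simp [hμ x]⟩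

theorem cellKernel_nonneg (hμ : ∀ y, 0 < μ y) (x y : S × A) : 0 ≤ cellKernel μ φ x y := by
  unfold cellKernel
  split_ifs
  exacts [div_nonneg (hμ y).le (cellMass_pos hμ x).le, le_rfl]

theorem sum_cellKernel (hμ : ∀ y, 0 < μ y) (x : S × A) : ∑ y, cellKernel μ φ x y = 1 :=
  calc ∑ y, cellKernel μ φ x y = (∑ y : S × A, if φ y = φ x then μ y else 0) / cellMass μ φ x := by
        rw [sum_div]
        exact sum_congr rfl fun y _ => by unfold cellKernel; split_ifs <;> simp
    _ = 1 := div_self (cellMass_pos hμ x).ne'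

theorem eq_of_cellKernel_ne_zero {x y : S × A} (h : cellKernel μ φ x y ≠ 0) : φ y = φ x := by
  by_contra hne
  exact h (if_neg hne)

theorem cellAvg_eq_sum_cellKernel (h : S × A → ℝ) (x : S × A) :
    cellAvg μ φ h x = ∑ y, cellKernel μ φ x y * h y := by
  rw [cellAvg, sum_div]
  refine sum_congr rfl fun y _ => ?_
  unfold cellKernel
  split_ifs
  · rw [div_mul_eq_mul_div]; rfl
  · simp

theorem cellAvg_eq_self_of_measurable (hμ : ∀ y, 0 < μ y) {g : S × A → ℝ}
    (hg : ∀ x y, φ x = φ y → g x = g y) (x : S × A) : cellAvg μ φ g x = g x := by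
  rw [cellAvg_eq_sum_cellKernel]
  exact sum_mul_eq_of_forall_ne_zero (sum_cellKernel hμ x)
    fun y hy => hg y x (eq_of_cellKernel_ne_zero hy)

noncomputable def cellTransition (μ : S × A → ℝ) (φ : S × A → I) (P : S × A → S → ℝ)
    (x : S × A) (s : S) : ℝ :=
  ∑ y, cellKernel μ φ x y * P y s

variable {P : S × A → S → ℝ}

theorem cellTransition_nonneg (hμ : ∀ y, 0 < μ y) (hP0 : ∀ x s, 0 ≤ P x s) (x : S × A)
    (s : S) : 0 ≤ cellTransition μ φ P x s :=
  sum_nonneg fun y _ => mul_nonneg (cellKernel_nonneg hμ x y) (hP0 y s)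

theorem sum_cellTransition (hμ : ∀ y, 0 < μ y) (hP1 : ∀ x, ∑ s, P x s = 1) (x : S × A) :
    ∑ s, cellTransition μ φ P x s = 1 := by
  simp only [cellTransition]
  rw [sum_sum_mul_kernel hP1, sum_cellKernel hμ]

theorem cellTransition_le (hμ : ∀ y, 0 < μ y) {b : S → ℝ} (hPb : ∀ x s, P x s ≤ b s)
    (x : S × A) (s : S) : cellTransition μ φ P x s ≤ b s :=
  sum_mul_le_of_le (cellKernel_nonneg hμ x) (sum_cellKernel hμ x) fun y => hPb y s

theorem TPol_sub_TPol (R : S × A → ℝ) (P : S × A → S → ℝ) (γ : ℝ) (π : S → A)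
    (f g : S × A → ℝ) (x : S × A) :
    TPol R P γ π f x - TPol R P γ π g x = γ * ∑ s, P x s * (f (s, π s) - g (s, π s)) := by
  simp only [TPol, mul_sub, sum_sub_distrib]
  ring

theorem cellAvg_TPol_sub_cellAvg {R : S × A → ℝ} {γ : ℝ} {π : S → A} {Q : S × A → ℝ}
    (hQ : TPol R P γ π Q = Q) (f : S × A → ℝ) (x : S × A) :
    cellAvg μ φ (TPol R P γ π f) x - cellAvg μ φ Q x
      = γ * ∑ s, cellTransition μ φ P x s * (f (s, π s) - Q (s, π s)) := by
  conv_lhs => rw [← hQ]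
  rw [cellAvg_eq_sum_cellKernel, cellAvg_eq_sum_cellKernel, ← sum_sub_distrib]
  simp only [← mul_sub, TPol_sub_TPol, cellTransition, mul_sum, sum_mul]
  rw [sum_comm]
  exact sum_congr rfl fun _ _ => sum_congr rfl fun _ _ => by ring

end Cells

section SupNorm

variable {S A I : Type*} [Fintype S] [Fintype A] [Nonempty S] [Nonempty A] [DecidableEq I]
  {μ : S × A → ℝ} {φ : S × A → I}

theorem le_supNorm (h : S × A → ℝ) (x : S × A) : |h x| ≤ supNorm h :=
  le_sup' (fun y => |h y|) (mem_univ x)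

theorem abs_cellAvg_sub_self_le (hμ : ∀ y, 0 < μ y) {g : S × A → ℝ}
    (hg : ∀ x y, φ x = φ y → g x = g y) (Q : S × A → ℝ) (x : S × A) :
    |cellAvg μ φ Q x - Q x| ≤ 2 * supNorm (fun y => g y - Q y) := by
  have hQg : cellAvg μ φ Q x - g x = ∑ y, cellKernel μ φ x y * (Q y - g y) := by
    rw [← cellAvg_eq_self_of_measurable hμ hg x, cellAvg_eq_sum_cellKernel,
      cellAvg_eq_sum_cellKernel, ← sum_sub_distrib]
    simp only [mul_sub]
  have hcell : |cellAvg μ φ Q x - g x| ≤ supNorm (fun y => g y - Q y) := by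
    rw [hQg]
    exact abs_sum_mul_le_of_abs_le (cellKernel_nonneg hμ x) (sum_cellKernel hμ x)
      fun y => abs_sub_comm (Q y) (g y) ▸ le_supNorm (fun y => g y - Q y) y
  linarith [abs_sub_le (cellAvg μ φ Q x) (g x) (Q x), le_supNorm (fun y => g y - Q y) x]

theorem abs_cellAvg_sub_self_le_two_mul_epsPhi (hμ : ∀ y, 0 < μ y) (Q : S × A → ℝ)
    (x : S × A) : |cellAvg μ φ Q x - Q x| ≤ 2 * epsPhi φ Q := by
  have : |cellAvg μ φ Q x - Q x| / 2 ≤ epsPhi φ Q := by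
    refine le_csInf ⟨_, fun _ => 0, fun _ _ _ => rfl, rfl⟩ ?_
    rintro _ ⟨g, hg, rfl⟩
    linarith [abs_cellAvg_sub_self_le hμ hg Q x]
  linarith

end SupNorm

section WeightedNorm

variable {S A : Type*} [Fintype S] [Fintype A] {ν : S × A → ℝ}

theorem l2mu_eq_norm (hν : ∀ x, 0 ≤ ν x) (h : S × A → ℝ) :
    l2mu ν h = ‖(WithLp.toLp 2 fun x => √(ν x) * h x : EuclideanSpace ℝ (S × A))‖ := by
  rw [EuclideanSpace.norm_eq, l2mu]
  congr 1
  refine sum_congr rfl fun x _ => ?_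
  simp [mul_pow, Real.sq_sqrt (hν x)]

theorem l2mu_add_le (hν : ∀ x, 0 ≤ ν x) (a b : S × A → ℝ) :
    l2mu ν (fun x => a x + b x) ≤ l2mu ν a + l2mu ν b := by
  simp only [l2mu_eq_norm hν, mul_add]
  exact norm_add_le (WithLp.toLp 2 fun x => √(ν x) * a x : EuclideanSpace ℝ (S × A))
    (WithLp.toLp 2 fun x => √(ν x) * b x)

theorem l2mu_le_sqrt_mul_l2mu {μ : S × A → ℝ} (hμ : ∀ x, 0 ≤ μ x) {C : ℝ}
    (hνμ : ∀ x, ν x ≤ C * μ x) (h : S × A → ℝ) : l2mu ν h ≤ √C * l2mu μ h := by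
  rw [l2mu, l2mu, ← Real.sqrt_mul' C (sum_nonneg fun x _ => mul_nonneg (hμ x) (sq_nonneg (h x))),
    mul_sum]
  refine Real.sqrt_le_sqrt (sum_le_sum fun x _ => ?_)
  rw [← mul_assoc]
  exact mul_le_mul_of_nonneg_right (hνμ x) (sq_nonneg _)

theorem l2mu_le_of_abs_le_s12 [Nonempty S] [Nonempty A] (hν0 : ∀ x, 0 ≤ ν x)
    (hν1 : ∑ x, ν x = 1) {h : S × A → ℝ} {c : ℝ} (hc : ∀ x, |h x| ≤ c) : l2mu ν h ≤ c := by
  have hc0 : 0 ≤ c := (abs_nonneg _).trans (hc (Classical.arbitrary _))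
  rw [l2mu, Real.sqrt_le_left hc0]
  exact sum_mul_le_of_le hν0 hν1 fun x => by
    rw [← sq_abs]
    exact pow_le_pow_left₀ (abs_nonneg _) (hc x) 2

end WeightedNorm

section Admissible

variable {S A : Type*} [Fintype S] [Fintype A] [DecidableEq A]

structure IsAdmissible (C : ℝ) (μ ρ : S × A → ℝ) : Prop where
  nonneg : ∀ x, 0 ≤ ρ x
  sum_eq_one : ∑ x, ρ x = 1
  le_mul : ∀ x, ρ x ≤ C * μ x

def liftPolicy (π : S → A) (q : S → ℝ) (x : S × A) : ℝ :=
  if x.2 = π x.1 then q x.1 else 0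

theorem sum_liftPolicy_mul (π : S → A) (q : S → ℝ) (h : S × A → ℝ) :
    ∑ x, liftPolicy π q x * h x = ∑ s, q s * h (s, π s) := by
  rw [Fintype.sum_prod_type]
  refine sum_congr rfl fun s _ => ?_
  simp [liftPolicy, ite_mul]

theorem isAdmissible_liftPolicy {μ : S × A → ℝ} (hμ : ∀ x, 0 ≤ μ x) {CA CS : ℝ}
    (hCA : 0 < CA) (hCS : 0 ≤ CS) (hA : ∀ x : S × A, μ x ≥ (∑ a : A, μ (x.1, a)) / CA)
    (π : S → A) {q : S → ℝ} (hq0 : ∀ s, 0 ≤ q s) (hq1 : ∑ s, q s = 1)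
    (hqμ : ∀ s, q s ≤ CS * ∑ a, μ (s, a)) : IsAdmissible (CS * CA) μ (liftPolicy π q) where
  nonneg x := by
    unfold liftPolicy
    split_ifs
    exacts [hq0 _, le_rfl]
  sum_eq_one := by simpa [hq1] using sum_liftPolicy_mul π q 1
  le_mul := by
    rintro ⟨s, a⟩
    unfold liftPolicy
    split_ifs with ha
    · have hμs := hA (s, a)
      rw [ge_iff_le, div_le_iff₀ hCA] at hμs
      calc q s ≤ CS * ∑ a, μ (s, a) := hqμ s
        _ ≤ CS * (μ (s, a) * CA) := by gcongr
        _ = CS * CA * μ (s, a) := by ring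
    · exact mul_nonneg (mul_nonneg hCS hCA.le) (hμ _)

end Admissible

section ErrorPropagation

variable {S A I : Type*} [Fintype S] [Fintype A] [DecidableEq A] [DecidableEq I]
  {R : S × A → ℝ} {P : S × A → S → ℝ} {γ : ℝ} {π : S → A} {μ Q : S × A → ℝ} {φ : S × A → I}
  {CA CS : ℝ}

theorem exists_isAdmissible_l2mu_cellAvg_TPol_sub_le (hμ : ∀ x, 0 < μ x)
    (hP0 : ∀ x s, 0 ≤ P x s) (hP1 : ∀ x, ∑ s, P x s = 1) (hγ0 : 0 ≤ γ)
    (hQ : TPol R P γ π Q = Q) (hCA : 0 < CA) (hCS : 0 ≤ CS)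
    (hA : ∀ x : S × A, μ x ≥ (∑ a : A, μ (x.1, a)) / CA)
    (hS : ∀ x s, P x s ≤ CS * ∑ a, μ (s, a)) (f : S × A → ℝ) {ρ : S × A → ℝ}
    (hρ : IsAdmissible (CS * CA) μ ρ) :
    ∃ ρ', IsAdmissible (CS * CA) μ ρ' ∧
      l2mu ρ (fun x => cellAvg μ φ (TPol R P γ π f) x - cellAvg μ φ Q x)
        ≤ γ * l2mu ρ' (fun x => f x - Q x) := by
  have hK0 := cellTransition_nonneg (φ := φ) hμ hP0
  have hK1 := sum_cellTransition (φ := φ) hμ hP1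
  set q : S → ℝ := fun s => ∑ x, ρ x * cellTransition μ φ P x s
  refine ⟨liftPolicy π q, isAdmissible_liftPolicy (fun x => (hμ x).le) hCA hCS hA π
    (fun s => sum_nonneg fun x _ => mul_nonneg (hρ.nonneg x) (hK0 x s))
    (by rw [sum_sum_mul_kernel hK1, hρ.sum_eq_one])
    (fun s => sum_mul_le_of_le hρ.nonneg hρ.sum_eq_one fun x => cellTransition_le hμ hS x s), ?_⟩
  set d : S → ℝ := fun s => f (s, π s) - Q (s, π s)
  have hpt := cellAvg_TPol_sub_cellAvg (μ := μ) (φ := φ) hQ f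
  calc l2mu ρ (fun x => cellAvg μ φ (TPol R P γ π f) x - cellAvg μ φ Q x)
      = √(γ ^ 2 * ∑ x, ρ x * (∑ s, cellTransition μ φ P x s * d s) ^ 2) := by
        rw [l2mu, mul_sum]
        exact congrArg _ (sum_congr rfl fun x _ => by rw [hpt x]; ring)
    _ ≤ √(γ ^ 2 * ∑ s, q s * d s ^ 2) :=
        Real.sqrt_le_sqrt (mul_le_mul_of_nonneg_left
          (sum_mul_sq_kernel_le hK0 hK1 hρ.nonneg d) (sq_nonneg γ))
    _ = γ * l2mu (liftPolicy π q) (fun x => f x - Q x) := by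
        rw [l2mu, sum_liftPolicy_mul, Real.sqrt_mul (sq_nonneg γ), Real.sqrt_sq hγ0]

theorem exists_isAdmissible_l2mu_sub_le [Nonempty S] [Nonempty A] (hμ : ∀ x, 0 < μ x)
    (hP0 : ∀ x s, 0 ≤ P x s) (hP1 : ∀ x, ∑ s, P x s = 1) (hγ0 : 0 ≤ γ)
    (hQ : TPol R P γ π Q = Q) (hCA : 0 < CA) (hCS : 0 ≤ CS)
    (hA : ∀ x : S × A, μ x ≥ (∑ a : A, μ (x.1, a)) / CA)
    (hS : ∀ x s, P x s ≤ CS * ∑ a, μ (s, a)) (f : S × A → ℝ) {ρ : S × A → ℝ}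
    (hρ : IsAdmissible (CS * CA) μ ρ) :
    ∃ ρ', IsAdmissible (CS * CA) μ ρ' ∧
      l2mu ρ (fun x => f x - Q x)
        ≤ 2 * epsPhi φ Q
          + √(CS * CA) * l2mu μ (fun x => f x - cellAvg μ φ (TPol R P γ π f) x)
          + γ * l2mu ρ' (fun x => f x - Q x) := by
  obtain ⟨ρ', hρ', hmid⟩ :=
    exists_isAdmissible_l2mu_cellAvg_TPol_sub_le (φ := φ) hμ hP0 hP1 hγ0 hQ hCA hCS hA hS f hρ
  refine ⟨ρ', hρ', ?_⟩
  set TG := cellAvg μ φ (TPol R P γ π f)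
  have hsplit : l2mu ρ (fun x => f x - Q x) ≤ l2mu ρ (fun x => f x - TG x)
      + l2mu ρ (fun x => TG x - cellAvg μ φ Q x) + l2mu ρ (fun x => cellAvg μ φ Q x - Q x) :=
    calc l2mu ρ (fun x => f x - Q x)
        = l2mu ρ (fun x => (f x - TG x + (TG x - cellAvg μ φ Q x)) + (cellAvg μ φ Q x - Q x)) := by
          congr 1; funext x; ring
      _ ≤ _ := (l2mu_add_le hρ.nonneg _ _).trans
          (add_le_add_left (l2mu_add_le hρ.nonneg _ _) _)
  have hfar := l2mu_le_sqrt_mul_l2mu (fun x => (hμ x).le) hρ.le_mul (fun x => f x - TG x)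
  have happrox := l2mu_le_of_abs_le_s12 hρ.nonneg hρ.sum_eq_one
    (abs_cellAvg_sub_self_le_two_mul_epsPhi (φ := φ) hμ Q)
  linarith

end ErrorPropagation

theorem le_div_one_sub_of_le_add_mul {α : Type*} {p : α → Prop} {g : α → ℝ} {B γ : ℝ}
    (hγ0 : 0 ≤ γ) (hγ1 : γ < 1) (hbdd : BddAbove (g '' {a | p a}))
    (hstep : ∀ a, p a → ∃ b, p b ∧ g a ≤ B + γ * g b) {a : α} (ha : p a) :
    g a ≤ B / (1 - γ) := by
  set M := sSup (g '' {a | p a})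
  have hle : ∀ b, p b → g b ≤ M := fun b hb => le_csSup hbdd (Set.mem_image_of_mem g hb)
  have hM : M ≤ B + γ * M := csSup_le ⟨g a, Set.mem_image_of_mem g ha⟩ <| by
    rintro _ ⟨b, hb, rfl⟩
    obtain ⟨c, hc, hbc⟩ := hstep b hb
    exact hbc.trans (by gcongr; exact hle c hc)
  rw [le_div_iff₀ (sub_pos.mpr hγ1)]
  nlinarith [hle a ha]

theorem stmt_12_general {S A I : Type*} [Fintype S] [Fintype A] [Nonempty S] [Nonempty A]
    [DecidableEq I]
    (R : S × A → ℝ)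
    (P : S × A → S → ℝ) (hP0 : ∀ x s', 0 ≤ P x s') (hP1 : ∀ x, ∑ s' : S, P x s' = 1)
    (γ : ℝ) (hγ0 : 0 ≤ γ) (hγ1 : γ < 1)
    (μ : S × A → ℝ) (hμpos : ∀ x, 0 < μ x)
    (CA CS : ℝ) (hCA : 1 ≤ CA) (hCS : 1 ≤ CS)
    (hA : ∀ x : S × A, μ x ≥ (∑ a : A, μ (x.1, a)) / CA)
    (hS : ∀ x : S × A, ∀ s' : S, P x s' ≤ CS * ∑ a : A, μ (s', a))
    (π : S → A)
    (Qpi : S × A → ℝ) (hQpi : TPol R P γ π Qpi = Qpi)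
    (φ : S × A → I) (f : S × A → ℝ) :
    ∀ ν : S × A → ℝ, (∀ x, 0 ≤ ν x) → (∑ x : S × A, ν x = 1) →
      (∀ x, ν x ≤ (CS * CA) * μ x) →
      l2mu ν (fun x => f x - Qpi x) ≤
        (2 * epsPhi φ Qpi +
          Real.sqrt (CS * CA) * l2mu μ (fun x => f x - cellAvg μ φ (TPol R P γ π f) x)) /
        (1 - γ) := by
  intro ν hν0 hν1 hνμ
  classical
  refine le_div_one_sub_of_le_add_mul (p := IsAdmissible (CS * CA) μ)
    (g := fun ρ => l2mu ρ fun x => f x - Qpi x) hγ0 hγ1 ?_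
    (fun ρ hρ => exists_isAdmissible_l2mu_sub_le (φ := φ) hμpos hP0 hP1 hγ0 hQpi (by linarith)
      (by linarith) hA hS f hρ) ⟨hν0, hν1, hνμ⟩
  refine ⟨supNorm fun x => f x - Qpi x, ?_⟩
  rintro _ ⟨ρ, hρ, rfl⟩
  exact l2mu_le_of_abs_le_s12 hρ.nonneg hρ.sum_eq_one (le_supNorm _)

/-- population error propagation for BVFT-PE: under Assumption 1 with
`C = C_S C_A`, for every distribution `ν ≤ C μ`,
`‖f − Q^π‖₂,ν ≤ (2 ε_φ + √C ‖f − T_G^π f‖₂,μ) / (1−γ)`. -/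
theorem stmt_12 {S A I : Type*} [Fintype S] [Fintype A] [Nonempty S] [Nonempty A]
    [DecidableEq I]
    (Rmax : ℝ) (R : S × A → ℝ) (hR : ∀ x, 0 ≤ R x ∧ R x ≤ Rmax)
    (P : S × A → S → ℝ) (hP0 : ∀ x s', 0 ≤ P x s') (hP1 : ∀ x, ∑ s' : S, P x s' = 1)
    (γ : ℝ) (hγ0 : 0 ≤ γ) (hγ1 : γ < 1)
    (μ : S × A → ℝ) (hμpos : ∀ x, 0 < μ x) (hμsum : ∑ x : S × A, μ x = 1)
    (CA CS : ℝ) (hCA : 1 ≤ CA) (hCS : 1 ≤ CS)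
    (hA : ∀ x : S × A, μ x ≥ (∑ a : A, μ (x.1, a)) / CA)
    (hS : ∀ x : S × A, ∀ s' : S, P x s' ≤ CS * ∑ a : A, μ (s', a))
    (π : S → A)
    (Qpi : S × A → ℝ) (hQpi : TPol R P γ π Qpi = Qpi)
    (φ : S × A → I) (f : S × A → ℝ) :
    ∀ ν : S × A → ℝ, (∀ x, 0 ≤ ν x) → (∑ x : S × A, ν x = 1) →
      (∀ x, ν x ≤ (CS * CA) * μ x) →
      l2mu ν (fun x => f x - Qpi x) ≤
        (2 * epsPhi φ Qpi +
          Real.sqrt (CS * CA) * l2mu μ (fun x => f x - cellAvg μ φ (TPol R P γ π f) x)) /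
        (1 - γ) :=
  stmt_12_general R P hP0 hP1 γ hγ0 hγ1 μ hμpos CA CS hCA hCS hA hS π Qpi hQpi φ f
end

section
/- (The BVFT-PE loss vanishes at Q^π.) In the finite MDP setting, let π : S → A be a deterministic policy with value function Q^π, μ a fully supported probability distribution on S×A, and φ : S×A → I a partition function such that Q^π is φ-measurable (in particular this holds for the BVFT partitions φ_{i,j} built from the values of Q_i = Q^π and any Q_j). Then T_G^π Q^π = Q^π, and hence ∥Q^π − T_G^π Q^π∥_{2,μ} = 0. -/
open Finset

/-- the BVFT-PE loss vanishes at `Q^π`: if `Q^π` is `φ`-measurable then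
`T_G^π Q^π = Q^π` and hence `‖Q^π − T_G^π Q^π‖₂,μ = 0`. -/
theorem stmt_14 {S A I : Type*} [Fintype S] [Fintype A] [Nonempty S] [Nonempty A]
    [DecidableEq I]
    (Rmax : ℝ) (R : S × A → ℝ) (hR : ∀ x, 0 ≤ R x ∧ R x ≤ Rmax)
    (P : S × A → S → ℝ) (hP0 : ∀ x s', 0 ≤ P x s') (hP1 : ∀ x, ∑ s' : S, P x s' = 1)
    (γ : ℝ) (hγ0 : 0 ≤ γ) (hγ1 : γ < 1)
    (π : S → A)
    (Qpi : S × A → ℝ) (hQpi : TPol R P γ π Qpi = Qpi)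
    (μ : S × A → ℝ) (hμpos : ∀ x, 0 < μ x) (hμsum : ∑ x : S × A, μ x = 1)
    (φ : S × A → I) (hmeas : ∀ x y, φ x = φ y → Qpi x = Qpi y) :
    cellAvg μ φ (TPol R P γ π Qpi) = Qpi ∧
    l2mu μ (fun x => Qpi x - cellAvg μ φ (TPol R P γ π Qpi) x) = 0 := by
  have key : cellAvg μ φ (TPol R P γ π Qpi) = Qpi := by
    funext x
    rw [hQpi]
    unfold cellAvg
    have hnum : (∑ y : S × A, if φ y = φ x then μ y * Qpi y else 0)
        = Qpi x * ∑ y : S × A, (if φ y = φ x then μ y else 0) := by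
      rw [Finset.mul_sum]
      refine Finset.sum_congr rfl fun y _ => ?_
      by_cases h : φ y = φ x
      · simp [h, hmeas y x h]; ring
      · simp [h]
    rw [hnum]
    have hden : 0 < ∑ y : S × A, (if φ y = φ x then μ y else 0) := by
      refine Finset.sum_pos' (fun y _ => ?_) ⟨x, Finset.mem_univ x, by simp [hμpos x]⟩
      by_cases h : φ y = φ x
      · simp [h, (hμpos y).le]
      · simp [h]
    field_simp
  refine ⟨key, ?_⟩
  rw [key]
  simp [l2mu]
end
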